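/- Let p, q be real numbers with p + q < 0 and p ≠ q. Then (2+e^p+e^q)/((1+e^p)(1+e^q)) ≠ (e^{(q-p)/2}(1+e^p) + e^{(p-q)/2}(1+e^q))/((1+e^p)(1+e^q)). Consequently, in the illustrative example the sequence e^{-nP_Δ} μ(Δ_n) does not converge. -/
import Mathlib


open Real Filter in
theorem stmt_5 (p q : ℝ) (hpq : p + q < 0) (hne : p ≠ q) :
    (2 + exp p + exp q) / ((1 + exp p) * (1 + exp q)) ≠
      (exp ((q - p) / 2) * (1 + exp p) + exp ((p - q) / 2) * (1 + exp q)) /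
        ((1 + exp p) * (1 + exp q)) ∧
    ∀ u : ℕ → ℝ,
      Tendsto (fun n => u (2 * n)) atTop
        (nhds ((2 + exp p + exp q) / ((1 + exp p) * (1 + exp q)))) →
      Tendsto (fun n => u (2 * n + 1)) atTop
        (nhds ((exp ((q - p) / 2) * (1 + exp p) + exp ((p - q) / 2) * (1 + exp q)) /
          ((1 + exp p) * (1 + exp q)))) →
      ¬ ∃ l : ℝ, Tendsto u atTop (nhds l) := by
  set a := exp (p / 2) with ha_def
  set b := exp (q / 2) with hb_def
  have ha : (0:ℝ) < a := exp_pos _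
  have hb : (0:ℝ) < b := exp_pos _
  have hab : a * b < 1 := by
    rw [ha_def, hb_def, ← exp_add]
    exact exp_lt_one_iff.mpr (by linarith)
  have hane : a ≠ b := fun h => hne (by
    have := Real.exp_injective h
    linarith)
  have hpa : exp p = a ^ 2 := by
    rw [ha_def, sq, ← exp_add]; ring_nf
  have hqb : exp q = b ^ 2 := by
    rw [hb_def, sq, ← exp_add]; ring_nf
  have hqp : exp ((q - p) / 2) = b / a := by
    rw [ha_def, hb_def, ← exp_sub]; ring_nf
  have hpq2 : exp ((p - q) / 2) = a / b := by
    rw [ha_def, hb_def, ← exp_sub]; ring_nf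
  have hden : (0:ℝ) < (1 + exp p) * (1 + exp q) :=
    mul_pos (by positivity) (by positivity)
  have hab0 : a - b ≠ 0 := sub_ne_zero.mpr hane
  have hsq : 0 < (a - b) ^ 2 := by positivity
  have hnum : (2 + exp p + exp q) <
      exp ((q - p) / 2) * (1 + exp p) + exp ((p - q) / 2) * (1 + exp q) := by
    rw [hpa, hqb, hqp, hpq2, div_mul_eq_mul_div, div_mul_eq_mul_div,
      div_add_div _ _ (ne_of_gt ha) (ne_of_gt hb), lt_div_iff₀ (by positivity)]
    nlinarith [mul_pos ha hb, sq_nonneg (a - b), sq_nonneg (a + b),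
      mul_pos (mul_pos ha hb) hsq]
  have hneq : (2 + exp p + exp q) / ((1 + exp p) * (1 + exp q)) ≠
      (exp ((q - p) / 2) * (1 + exp p) + exp ((p - q) / 2) * (1 + exp q)) /
        ((1 + exp p) * (1 + exp q)) :=
    ne_of_lt ((div_lt_div_iff_of_pos_right hden).mpr hnum)
  refine ⟨hneq, fun u h0 h1 ⟨l, hl⟩ => ?_⟩
  have ht1 : Tendsto (fun n : ℕ => 2 * n) atTop atTop :=
    tendsto_atTop_atTop.mpr fun n => ⟨n, fun m hm => by omega⟩
  have ht2 : Tendsto (fun n : ℕ => 2 * n + 1) atTop atTop :=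
    tendsto_atTop_atTop.mpr fun n => ⟨n, fun m hm => by omega⟩
  have e1 := tendsto_nhds_unique h0 (hl.comp ht1)
  have e2 := tendsto_nhds_unique h1 (hl.comp ht2)
  exact hneq (e1.trans e2.symm)
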